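/- arXiv:2207.04954 — 5 statements merged into one kernel-verified Lean document; each statement's English description precedes it below -/
import Mathlib

section
/- For every n ≥ 2, every natural number k ≥ 1, and every sequence of simple graphs G_0, G_1, …, G_U on a fixed vertex set of n vertices such that G_0 is the empty graph and, for each 1 ≤ t ≤ U, G_t is obtained from G_{t−1} by inserting or deleting a single edge, there exist simple graphs H_0, H_1, …, H_U on the same vertex set and an absolute constant C > 0 such that for every t: H_t is a subgraph of G_t, H_t is a (2k−1)-spanner of G_t, H_t has at most C · n^{1+1/k} · log n edges (as a real-number inequality), and the total recourse ∑_{t=1}^{U} #(E(H_t) Δ E(H_{t−1})) is at most C · (U+1) · log n. -/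
/-!
A subgraph `S ≤ G` that is maximal among those in which any two paths with common ends and total
length at most `2k` coincide (girth `> 2k`) is a `(2k-1)`-spanner of `G`: if an edge `uv` of `G`
were stretched further, `S ⊔ edge u v` would still have that property. By the Moore bound such an
`S` has at most `D n` edges as soon as `n < D ^ k`, because in a core of minimum degree `> D` the
spheres around a vertex grow by a factor `D` up to radius `k`. With `D = ⌊n ^ (1/k)⌋ + 1` this is
at most `2 n ^ (1 + 1/k)`.

Dynamically, cut time into epochs of length `L = D n`. At the start of an epoch take such a
spanner of the current graph with every edge that will be updated during the epoch removed, and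
keep the updated edges on top of it while they are present. Inside an epoch a step changes `H` in
at most the updated edge, and a change of epoch costs at most `4L`, so the total recourse is at
most `5U`.
-/

open Finset SimpleGraph

theorem Set.sdiff_eq_sdiff_of_symmDiff_subset {α : Type*} {s t u : Set α}
    (h : symmDiff s t ⊆ u) : s \ u = t \ u := by
  ext x
  have := @h x
  simp only [Set.mem_symmDiff, Set.mem_sdiff] at this ⊢
  tauto

theorem Finset.sum_Icc_le_of_dvd_of_not_dvd {f : ℕ → ℕ} {L U a b : ℕ}
    (hndvd : ∀ t ∈ Icc 1 U, ¬L ∣ t → f t ≤ a)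
    (hdvd : ∀ t ∈ Icc 1 U, L ∣ t → f t ≤ b * L) :
    ∑ t ∈ Icc 1 U, f t ≤ (a + b) * U := by
  rw [← sum_filter_add_sum_filter_not _ (L ∣ ·)]
  have hcard : #{t ∈ Icc 1 U | L ∣ t} = U / L := by
    rw [← Nat.Ioc_filter_dvd_card_eq_div]
    rfl
  have h₁ : ∑ t ∈ Icc 1 U with L ∣ t, f t ≤ U / L * (b * L) := by
    rw [← hcard, ← smul_eq_mul]
    exact sum_le_card_nsmul _ _ _ fun t ht => hdvd t (mem_filter.mp ht).1 (mem_filter.mp ht).2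
  have h₂ : ∑ t ∈ Icc 1 U with ¬L ∣ t, f t ≤ U * a := by
    refine (sum_le_card_nsmul _ _ a fun t ht =>
      hndvd t (mem_filter.mp ht).1 (mem_filter.mp ht).2).trans ?_
    rw [smul_eq_mul]
    exact Nat.mul_le_mul_right a ((card_filter_le _ _).trans (by simp))
  have h₃ : U / L * (b * L) ≤ b * U := by
    rw [mul_comm b, ← mul_assoc, mul_comm]
    exact Nat.mul_le_mul_left b (Nat.div_mul_le_self U L)
  nlinarith

theorem lt_floor_rpow_add_one_pow (n : ℕ) {k : ℕ} (hk : k ≠ 0) :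
    n < (⌊(n : ℝ) ^ (1 / (k : ℝ))⌋₊ + 1) ^ k := by
  have := pow_lt_pow_left₀ (Nat.lt_floor_add_one ((n : ℝ) ^ (1 / (k : ℝ)))) (by positivity) hk
  have hroot : ((n : ℝ) ^ (1 / (k : ℝ))) ^ k = n := by
    rw [one_div]
    exact Real.rpow_inv_natCast_pow n.cast_nonneg hk
  rw [hroot] at this
  exact_mod_cast this

theorem floor_rpow_add_one_mul_le {n : ℕ} (hn : 1 ≤ n) (k : ℕ) :
    ((⌊(n : ℝ) ^ (1 / (k : ℝ))⌋₊ + 1 : ℕ) : ℝ) * n ≤ 2 * (n : ℝ) ^ (1 + 1 / (k : ℝ)) := by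
  have hn' : (1 : ℝ) ≤ n := by exact_mod_cast hn
  have hroot : 1 ≤ (n : ℝ) ^ (1 / (k : ℝ)) := Real.one_le_rpow hn' (by positivity)
  rw [Real.rpow_add (by linarith), Real.rpow_one]
  push_cast
  nlinarith [Nat.floor_le (by positivity : (0 : ℝ) ≤ (n : ℝ) ^ (1 / (k : ℝ)))]

namespace SimpleGraph

variable {V : Type} {G H S T : SimpleGraph V}

theorem Walk.exists_eq_append_cons_of_mem_edges {x y : V} {e : Sym2 V} {p : G.Walk x y}
    (he : e ∈ p.edges) :
    ∃ (a b : V) (hab : G.Adj a b) (p₁ : G.Walk x a) (p₂ : G.Walk b y),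
      s(a, b) = e ∧ p = p₁.append (cons hab p₂) := by
  induction p with
  | nil => simp at he
  | @cons x c y hxc q ih =>
    rcases List.mem_cons.mp he with rfl | he
    · exact ⟨x, c, hxc, nil, q, rfl, rfl⟩
    · obtain ⟨a, b, hab, p₁, p₂, rfl, rfl⟩ := ih he
      exact ⟨a, b, hab, cons hxc p₁, p₂, rfl, rfl⟩

theorem Walk.IsTrail.notMem_edges_of_eq_append_cons {x y a b : V} {p : G.Walk x y}
    {hab : G.Adj a b} {p₁ : G.Walk x a} {p₂ : G.Walk b y} (hp : p.IsTrail)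
    (h : p = p₁.append (cons hab p₂)) : s(a, b) ∉ p₁.edges ∧ s(a, b) ∉ p₂.edges := by
  have := hp.edges_nodup
  rw [h, Walk.edges_append, Walk.edges_cons, List.nodup_middle, List.nodup_cons,
    List.mem_append] at this
  exact not_or.mp this.1

theorem edist_le_mul_edist_of_forall_adj {c : ℕ} (hc : c ≠ 0)
    (h : ∀ u v, G.Adj u v → H.edist u v ≤ c) (u v : V) : H.edist u v ≤ c * G.edist u v := by
  have hwalk : ∀ {x y : V} (p : G.Walk x y), H.edist x y ≤ c * p.length := by
    intro x y p
    induction p with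
    | nil => simp
    | cons hadj p ih =>
      calc _ ≤ _ := H.edist_triangle
        _ ≤ c + c * p.length := add_le_add (h _ _ hadj) ih
        _ = c * (p.cons hadj).length := by simp [mul_add, add_comm]
  by_cases hr : G.Reachable u v
  · obtain ⟨p, hp⟩ := hr.exists_walk_length_eq_edist
    exact hp ▸ hwalk p
  · rw [edist_eq_top_of_not_reachable hr, ENat.mul_top (by exact_mod_cast hc)]
    exact le_top

theorem ncard_incidenceSet_eq_ncard_neighborSet [DecidableEq V] (v : V) :
    (G.incidenceSet v).ncard = (G.neighborSet v).ncard :=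
  Set.ncard_congr' (G.incidenceSetEquivNeighborSet v)

/-- Deleting the edges at a vertex of degree at most `D` loses at most `D` edges and one vertex of
the support, so iterating this while possible ends in a nonempty core. -/
theorem exists_le_forall_lt_ncard_neighborSet [Finite V] (D : ℕ) (S : SimpleGraph V)
    (h : D * S.support.ncard < S.edgeSet.ncard) :
    ∃ T ≤ S, T.support.Nonempty ∧ ∀ v ∈ T.support, D < (T.neighborSet v).ncard := by
  classical
  induction hm : S.support.ncard using Nat.strong_induction_on generalizing S with
  | _ m ih =>
  by_cases hdeg : ∀ v ∈ S.support, D < (S.neighborSet v).ncard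
  · obtain ⟨e, he⟩ := Set.nonempty_of_ncard_ne_zero (by omega : S.edgeSet.ncard ≠ 0)
    induction e using Sym2.ind with
    | _ a b => exact ⟨S, le_rfl, ⟨a, b, he⟩, hdeg⟩
  obtain ⟨v, hv, hvD⟩ := not_forall₂.mp hdeg
  rw [not_lt] at hvD
  rw [hm] at h
  have hE : (S.deleteIncidenceSet v).edgeSet.ncard =
      S.edgeSet.ncard - (S.neighborSet v).ncard := by
    rw [edgeSet_deleteIncidenceSet, Set.ncard_sdiff (S.incidenceSet_subset v),
      ncard_incidenceSet_eq_ncard_neighborSet]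
  have hsupp : (S.deleteIncidenceSet v).support.ncard ≤ m - 1 :=
    hm ▸ (Set.ncard_le_ncard (support_deleteIncidenceSet_subset S v)).trans
      (Set.ncard_sdiff_singleton_of_mem hv).le
  have hpos : 0 < m := hm ▸ (Set.ncard_pos (Set.toFinite _)).mpr ⟨v, hv⟩
  have hmul : D * (S.deleteIncidenceSet v).support.ncard ≤ D * m - D :=
    (Nat.mul_le_mul_left D hsupp).trans (Nat.mul_sub_one D m).le
  have := Nat.le_mul_of_pos_right D hpos
  obtain ⟨T, hT, hTne, hTdeg⟩ :=
    ih (S.deleteIncidenceSet v).support.ncard (by omega) (S.deleteIncidenceSet v) (by omega) rfl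
  exact ⟨T, hT.trans (deleteIncidenceSet_le S v), hTne, hTdeg⟩

theorem exists_isPath_length_le_notMem_support {v₀ u w : V} {i : ℕ}
    (hu : (i : ℕ∞) ≤ T.edist v₀ u) (huw : u ≠ w) (hw : T.edist v₀ w ≤ i) :
    ∃ P : T.Walk v₀ w, P.IsPath ∧ P.length ≤ i ∧ u ∉ P.support := by
  have hreach : T.Reachable v₀ w := reachable_of_edist_ne_top (ne_top_of_le_ne_top (by simp) hw)
  obtain ⟨P, hP, hPlen⟩ := hreach.exists_path_of_dist
  have hPi : P.length ≤ i := by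
    rw [← hreach.coe_dist_eq_edist, ← hPlen] at hw
    exact_mod_cast hw
  refine ⟨P, hP, hPi, fun huP => ?_⟩
  -- a shortest path through `u` would reach `u` in fewer than `i` steps
  obtain ⟨q, r, rfl⟩ := Walk.mem_support_iff_exists_append.mp huP
  have hr : r.length ≠ 0 := fun h => huw (Walk.eq_of_length_eq_zero h)
  have := hu.trans (edist_le q)
  rw [Walk.length_append] at hPi
  have : i ≤ q.length := by exact_mod_cast this
  omega

/-- Equivalent to girth `> 2k`, but phrased through pairs of paths, which is how both the greedy
argument and the Moore bound use it. -/
def UniqueShortPaths (G : SimpleGraph V) (k : ℕ) : Prop :=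
  ∀ ⦃u w : V⦄ (p q : G.Walk u w), p.IsPath → q.IsPath → p.length + q.length ≤ 2 * k →
    p.edges = q.edges

theorem uniqueShortPaths_bot (k : ℕ) : (⊥ : SimpleGraph V).UniqueShortPaths k := by
  have : ∀ {u w : V} (r : (⊥ : SimpleGraph V).Walk u w), r.edges = [] := by
    intro u w r
    cases r with
    | nil => rfl
    | cons h _ => exact absurd h (by simp)
  exact fun _ _ p q _ _ _ => by rw [this p, this q]

theorem UniqueShortPaths.anti {k : ℕ} (hGS : G ≤ S) (hS : S.UniqueShortPaths k) :
    G.UniqueShortPaths k := by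
  intro u w p q hp hq hlen
  have hsub : ∀ {a b : V} (r : G.Walk a b), ∀ f ∈ r.edges, f ∈ S.edgeSet :=
    fun r _ hf => edgeSet_mono hGS (r.edges_subset_edgeSet hf)
  simpa only [Walk.edges_transfer] using
    hS (p.transfer S (hsub p)) (q.transfer S (hsub q)) (hp.transfer _) (hq.transfer _)
      (by simpa only [Walk.length_transfer] using hlen)

section SupEdge

variable {u v : V}

theorem Walk.mem_edgeSet_of_notMem_edges {a b : V} (r : (S ⊔ edge u v).Walk a b)
    (hr : s(u, v) ∉ r.edges) : ∀ f ∈ r.edges, f ∈ S.edgeSet := by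
  intro f hf
  rcases (edgeSet_sup _ _ ▸ r.edges_subset_edgeSet hf : f ∈ S.edgeSet ∪ (edge u v).edgeSet)
    with hS | he
  · exact hS
  · exact absurd (Set.mem_singleton_iff.mp (edgeSet_edge_subset he) ▸ hf) hr

theorem Walk.le_length_of_notMem_edges {k : ℕ} (hfar : ((2 * k - 1 : ℕ) : ℕ∞) < S.edist u v)
    {a b : V} (r : (S ⊔ edge u v).Walk a b) (hr : s(u, v) ∉ r.edges) (hab : s(a, b) = s(u, v)) :
    2 * k ≤ r.length := by
  have hd : S.edist a b = S.edist u v := by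
    rcases Sym2.eq_iff.mp hab with ⟨rfl, rfl⟩ | ⟨rfl, rfl⟩
    exacts [rfl, edist_comm]
  have := (hd ▸ hfar).trans_le (edist_le (r.transfer S (r.mem_edgeSet_of_notMem_edges hr)))
  rw [Walk.length_transfer] at this
  have : 2 * k - 1 < r.length := by exact_mod_cast this
  omega

theorem Walk.IsPath.lt_length_add_length_of_mem_edges {k : ℕ}
    (hfar : ((2 * k - 1 : ℕ) : ℕ∞) < S.edist u v) {x y : V} {p q : (S ⊔ edge u v).Walk x y}
    (hp : p.IsPath) (hpe : s(u, v) ∈ p.edges) (hqe : s(u, v) ∉ q.edges) :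
    2 * k < p.length + q.length := by
  obtain ⟨a, b, hab, p₁, p₂, he, rfl⟩ := Walk.exists_eq_append_cons_of_mem_edges hpe
  obtain ⟨hp₁, hp₂⟩ := he ▸ hp.isTrail.notMem_edges_of_eq_append_cons rfl
  -- going back along `p₁`, then along `q`, then back along `p₂` joins the ends of the new edge
  have := ((p₁.reverse.append q).append p₂.reverse).le_length_of_notMem_edges hfar
    (by simp [hp₁, hp₂, hqe]) he
  simp only [Walk.length_append, Walk.length_reverse, Walk.length_cons] at this ⊢
  omega

theorem Walk.IsPath.edges_eq_of_mem_edges {k : ℕ} (hS : S.UniqueShortPaths k)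
    (hfar : ((2 * k - 1 : ℕ) : ℕ∞) < S.edist u v) {x y : V} {p q : (S ⊔ edge u v).Walk x y}
    (hp : p.IsPath) (hq : q.IsPath) (hlen : p.length + q.length ≤ 2 * k)
    (hpe : s(u, v) ∈ p.edges) (hqe : s(u, v) ∈ q.edges) : p.edges = q.edges := by
  obtain ⟨a, b, hab, p₁, p₂, he, rfl⟩ := Walk.exists_eq_append_cons_of_mem_edges hpe
  obtain ⟨a', b', hab', q₁, q₂, he', rfl⟩ := Walk.exists_eq_append_cons_of_mem_edges hqe
  obtain ⟨hp₁, hp₂⟩ := he ▸ hp.isTrail.notMem_edges_of_eq_append_cons rfl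
  obtain ⟨hq₁, hq₂⟩ := he' ▸ hq.isTrail.notMem_edges_of_eq_append_cons rfl
  simp only [Walk.length_append, Walk.length_cons] at hlen
  rcases Sym2.eq_iff.mp (he.trans he'.symm) with ⟨rfl, rfl⟩ | ⟨rfl, rfl⟩
  · have h₁ := hS (p₁.transfer S (p₁.mem_edgeSet_of_notMem_edges hp₁))
      (q₁.transfer S (q₁.mem_edgeSet_of_notMem_edges hq₁))
      (hp.of_append_left.transfer _) (hq.of_append_left.transfer _)
      (by simp only [Walk.length_transfer]; omega)
    have h₂ := hS (p₂.transfer S (p₂.mem_edgeSet_of_notMem_edges hp₂))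
      (q₂.transfer S (q₂.mem_edgeSet_of_notMem_edges hq₂))
      (hp.of_append_right.of_cons.transfer _) (hq.of_append_right.of_cons.transfer _)
      (by simp only [Walk.length_transfer]; omega)
    simp only [Walk.edges_transfer] at h₁ h₂
    simp [h₁, h₂]
  · have := (p₁.reverse.append q₁).le_length_of_notMem_edges hfar (by simp [hp₁, hq₁]) he
    simp only [Walk.length_append, Walk.length_reverse] at this
    omega

theorem UniqueShortPaths.sup_edge {k : ℕ} (hS : S.UniqueShortPaths k)
    (hfar : ((2 * k - 1 : ℕ) : ℕ∞) < S.edist u v) : (S ⊔ edge u v).UniqueShortPaths k := by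
  intro x y p q hp hq hlen
  by_cases hpe : s(u, v) ∈ p.edges <;> by_cases hqe : s(u, v) ∈ q.edges
  · exact hp.edges_eq_of_mem_edges hS hfar hq hlen hpe hqe
  · exact absurd hlen (hp.lt_length_add_length_of_mem_edges hfar hpe hqe).not_ge
  · exact absurd hlen (by have := hq.lt_length_add_length_of_mem_edges hfar hqe hpe; omega)
  · simpa only [Walk.edges_transfer] using
      hS (p.transfer S (p.mem_edgeSet_of_notMem_edges hpe))
        (q.transfer S (q.mem_edgeSet_of_notMem_edges hqe)) (hp.transfer _) (hq.transfer _)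
        (by simpa only [Walk.length_transfer] using hlen)

end SupEdge

theorem edist_le_of_maximal_uniqueShortPaths {k : ℕ} (hk : 1 ≤ k)
    (hS : Maximal (fun S => S ≤ G ∧ S.UniqueShortPaths k) S) {u v : V} (huv : G.Adj u v) :
    S.edist u v ≤ (2 * k - 1 : ℕ) := by
  by_contra hfar
  rw [not_le] at hfar
  have hle : S ⊔ edge u v ≤ S :=
    hS.2 ⟨sup_le hS.1.1 ((edge_le_iff G).mpr (.inr huv)), hS.1.2.sup_edge hfar⟩ le_sup_left
  have hadj : S.Adj u v := hle (.inr ((edge_adj _ _ _ _).mpr ⟨.inl ⟨rfl, rfl⟩, huv.ne⟩))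
  rw [edist_eq_one_iff_adj.mpr hadj] at hfar
  have : 2 * k - 1 < 1 := by exact_mod_cast hfar
  omega

/-- Shortest paths from `v₀` to `w₁` and to `w₂`, extended by the edges to `u`, are two short paths
from `v₀` to `u`. -/
theorem UniqueShortPaths.eq_of_adj_of_edist_le {k i : ℕ} (hT : T.UniqueShortPaths k)
    (hik : i + 1 ≤ k) {v₀ u w₁ w₂ : V} (hu : (i : ℕ∞) ≤ T.edist v₀ u) (h₁ : T.Adj u w₁)
    (h₂ : T.Adj u w₂) (hw₁ : T.edist v₀ w₁ ≤ i) (hw₂ : T.edist v₀ w₂ ≤ i) : w₁ = w₂ := by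
  obtain ⟨P₁, hP₁, hlen₁, hu₁⟩ := exists_isPath_length_le_notMem_support hu h₁.ne hw₁
  obtain ⟨P₂, hP₂, hlen₂, hu₂⟩ := exists_isPath_length_le_notMem_support hu h₂.ne hw₂
  have := hT (P₁.concat h₁.symm) (P₂.concat h₂.symm) (hP₁.concat hu₁ _) (hP₂.concat hu₂ _)
    (by simp only [Walk.length_concat]; omega)
  simp only [Walk.edges_concat, List.concat_eq_append] at this
  exact Sym2.congr_left.mp (List.singleton_inj.mp (List.append_inj' this rfl).2)

theorem UniqueShortPaths.le_card_adj_edist_eq_succ [Fintype V] [DecidableRel T.Adj]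
    {k D i : ℕ} (hT : T.UniqueShortPaths k) (hdeg : ∀ v ∈ T.support, D < (T.neighborSet v).ncard)
    {v₀ u : V} (hv₀ : v₀ ∈ T.support) (hik : i + 1 ≤ k) (hu : T.edist v₀ u = i) :
    D ≤ #{w | T.edist v₀ w = ↑(i + 1) ∧ T.Adj u w} := by
  classical
  have huT : u ∈ T.support := by
    by_cases h : u = v₀
    · exact h ▸ hv₀
    · have hr : T.Reachable v₀ u := reachable_of_edist_ne_top (by rw [hu]; simp)
      exact mem_support_of_reachable h hr.symm
  have hinner : #{w | T.Adj u w ∧ T.edist v₀ w ≤ i} ≤ 1 := by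
    refine card_le_one.mpr fun w₁ hw₁ w₂ hw₂ => ?_
    rw [mem_filter_univ] at hw₁ hw₂
    exact hT.eq_of_adj_of_edist_le hik hu.ge hw₁.1 hw₂.1 hw₁.2 hw₂.2
  have hsplit : ({w | T.Adj u w} : Finset V) ⊆
      ({w | T.edist v₀ w = ↑(i + 1) ∧ T.Adj u w} : Finset V) ∪
        ({w | T.Adj u w ∧ T.edist v₀ w ≤ i} : Finset V) := by
    intro w hw
    rw [mem_filter_univ] at hw
    have hle : T.edist v₀ w ≤ i + 1 :=
      hu ▸ (T.edist_triangle).trans_eq (by rw [edist_eq_one_iff_adj.mpr hw])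
    rcases hle.lt_or_eq with hlt | heq
    · exact mem_union_right _ (by
        simpa [hw] using (ENat.lt_add_one_iff (ENat.natCast_ne_top i)).mp hlt)
    · exact mem_union_left _ (by simp [hw, heq])
  have hcard : (T.neighborSet u).ncard = #{w | T.Adj u w} := by
    rw [← Set.ncard_coe_finset]
    congr 1
    ext
    simp
  have := (card_le_card hsplit).trans (card_union_le _ _)
  have := hdeg u huT
  omega

/-- The spheres around `v₀` grow by a factor `D` up to radius `k`, by double counting the edges
between consecutive spheres: each vertex of a sphere has at most one neighbour closer to `v₀`
(or at the same distance), hence at least `D` further out. -/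
theorem UniqueShortPaths.pow_le_card_sphere [Fintype V] {k D : ℕ} (hT : T.UniqueShortPaths k)
    (hdeg : ∀ v ∈ T.support, D < (T.neighborSet v).ncard) {v₀ : V} (hv₀ : v₀ ∈ T.support)
    {i : ℕ} (hi : i ≤ k) : D ^ i ≤ #{u | T.edist v₀ u = i} := by
  classical
  induction i with
  | zero => exact (pow_zero D).trans_le (one_le_card.mpr ⟨v₀, by simp⟩)
  | succ i ih =>
    have hout : ∀ u ∈ ({u | T.edist v₀ u = i} : Finset V),
        D ≤ #(bipartiteAbove T.Adj {w | T.edist v₀ w = ↑(i + 1)} u) := by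
      intro u hu
      rw [mem_filter_univ] at hu
      rw [bipartiteAbove, filter_filter]
      exact hT.le_card_adj_edist_eq_succ hdeg hv₀ hi hu
    have hin : ∀ w ∈ ({w | T.edist v₀ w = ↑(i + 1)} : Finset V),
        #(bipartiteBelow T.Adj {u | T.edist v₀ u = i} w) ≤ 1 := by
      intro w hw
      rw [mem_filter_univ] at hw
      refine card_le_one.mpr fun u₁ hu₁ u₂ hu₂ => ?_
      simp only [bipartiteBelow, mem_filter, mem_univ, true_and] at hu₁ hu₂
      exact hT.eq_of_adj_of_edist_le hi (by rw [hw]; exact_mod_cast i.le_succ)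
        hu₁.2.symm hu₂.2.symm hu₁.1.le hu₂.1.le
    calc D ^ (i + 1) = D ^ i * D := pow_succ D i
      _ ≤ #{u | T.edist v₀ u = i} * D := Nat.mul_le_mul_right D (ih (by omega))
      _ ≤ #{w | T.edist v₀ w = ↑(i + 1)} * 1 := card_mul_le_card_mul T.Adj hout hin
      _ = _ := mul_one _

theorem UniqueShortPaths.ncard_edgeSet_le [Fintype V] {k D : ℕ} (hS : S.UniqueShortPaths k)
    (hD : Fintype.card V < D ^ k) : S.edgeSet.ncard ≤ D * Fintype.card V := by
  classical
  by_contra! h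
  have hsupp : S.support.ncard ≤ Fintype.card V := by
    simpa using Set.ncard_le_ncard (Set.subset_univ S.support)
  obtain ⟨T, hTS, ⟨v₀, hv₀⟩, hdeg⟩ := exists_le_forall_lt_ncard_neighborSet D S
    ((Nat.mul_le_mul_left D hsupp).trans_lt h)
  have := (hS.anti hTS).pow_le_card_sphere hdeg hv₀ le_rfl
  have := card_le_univ ({u | T.edist v₀ u = k} : Finset V)
  omega

theorem exists_spanner_ncard_edgeSet_le [Fintype V] (G : SimpleGraph V) {k D : ℕ} (hk : 1 ≤ k)
    (hD : Fintype.card V < D ^ k) :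
    ∃ S ≤ G, (∀ u v, G.Adj u v → S.edist u v ≤ (2 * k - 1 : ℕ)) ∧
      S.edgeSet.ncard ≤ D * Fintype.card V := by
  obtain ⟨S, -, hS⟩ := Finite.exists_le_maximal
    (p := fun S : SimpleGraph V => S ≤ G ∧ S.UniqueShortPaths k)
    ⟨bot_le, uniqueShortPaths_bot k⟩
  exact ⟨S, hS.1.1, fun _ _ => edist_le_of_maximal_uniqueShortPaths hk hS,
    hS.1.2.ncard_edgeSet_le hD⟩

theorem symmDiff_edgeSet_subset_of_eq_sup_or_eq_deleteEdges {G G' : SimpleGraph V} {e : Sym2 V}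
    (h : G' = G ⊔ fromEdgeSet {e} ∨ G' = G.deleteEdges {e}) :
    symmDiff G'.edgeSet G.edgeSet ⊆ {e} := by
  intro f
  rcases h with rfl | rfl <;>
    simp only [edgeSet_sup, edgeSet_fromEdgeSet, edgeSet_deleteEdges, Set.mem_symmDiff,
      Set.mem_union, Set.mem_sdiff, Set.mem_singleton_iff] <;> tauto

theorem ncard_edgeSet_sup_inf_fromEdgeSet_le [Finite V] (S G : SimpleGraph V)
    (X : Set (Sym2 V)) :
    (S ⊔ (G ⊓ fromEdgeSet X)).edgeSet.ncard ≤ S.edgeSet.ncard + X.ncard := by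
  rw [edgeSet_sup]
  refine (Set.ncard_union_le _ _).trans (Nat.add_le_add_left (Set.ncard_le_ncard ?_) _)
  rw [edgeSet_inf, edgeSet_fromEdgeSet]
  exact fun _ hf => hf.2.1

theorem symmDiff_edgeSet_sup_inf_subset (S G G' K : SimpleGraph V) :
    symmDiff (S ⊔ (G ⊓ K)).edgeSet (S ⊔ (G' ⊓ K)).edgeSet ⊆ symmDiff G.edgeSet G'.edgeSet := by
  intro f
  simp only [edgeSet_sup, edgeSet_inf, Set.mem_symmDiff, Set.mem_union, Set.mem_inter_iff]
  tauto

theorem edist_sup_inf_fromEdgeSet_le {X : Set (Sym2 V)} {c : ℕ}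
    (hc : 1 ≤ c) (hS : ∀ u v, (G.deleteEdges X).Adj u v → S.edist u v ≤ c) {u v : V}
    (huv : G.Adj u v) : (S ⊔ (G ⊓ fromEdgeSet X)).edist u v ≤ c := by
  by_cases hX : s(u, v) ∈ X
  · have hadj : (S ⊔ (G ⊓ fromEdgeSet X)).Adj u v := .inr ⟨huv, hX, huv.ne⟩
    rw [edist_eq_one_iff_adj.mpr hadj]
    exact_mod_cast hc
  · exact (edist_anti le_sup_left).trans (hS u v (deleteEdges_adj.mpr ⟨huv, hX⟩))

section Dynamic

variable {G : ℕ → SimpleGraph V} {e : ℕ → Sym2 V} {U : ℕ}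

theorem deleteEdges_eq_of_image_Ioc_subset
    (he : ∀ t, 1 ≤ t → t ≤ U → symmDiff (G t).edgeSet (G (t - 1)).edgeSet ⊆ {e t})
    {a s : ℕ} (has : a ≤ s) (hs : s ≤ U) {X : Set (Sym2 V)} (hX : e '' Set.Ioc a s ⊆ X) :
    (G s).deleteEdges X = (G a).deleteEdges X := by
  induction s, has using Nat.le_induction with
  | base => rfl
  | succ s has ih =>
    rw [← ih (by omega) ((Set.image_mono (Set.Ioc_subset_Ioc_right s.le_succ)).trans hX),
      ← edgeSet_inj, edgeSet_deleteEdges, edgeSet_deleteEdges]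
    refine Set.sdiff_eq_sdiff_of_symmDiff_subset ((he (s + 1) (by omega) hs).trans ?_)
    exact Set.singleton_subset_iff.mpr (hX ⟨s + 1, ⟨by omega, le_rfl⟩, rfl⟩)

theorem exists_dynamic_spanner [Finite V] {c L : ℕ} (hc : 1 ≤ c) (hL : 0 < L)
    (hstatic : ∀ Y : SimpleGraph V,
      ∃ S ≤ Y, (∀ u v, Y.Adj u v → S.edist u v ≤ c) ∧ S.edgeSet.ncard ≤ L)
    (he : ∀ t, 1 ≤ t → t ≤ U → symmDiff (G t).edgeSet (G (t - 1)).edgeSet ⊆ {e t}) :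
    ∃ H : ℕ → SimpleGraph V,
      (∀ t ≤ U, H t ≤ G t ∧ (∀ u v, (G t).Adj u v → (H t).edist u v ≤ c) ∧
        (H t).edgeSet.ncard ≤ 2 * L) ∧
      ∑ t ∈ Icc 1 U, (symmDiff (H t).edgeSet (H (t - 1)).edgeSet).ncard ≤ 5 * U := by
  set X : ℕ → Set (Sym2 V) := fun q => e '' Set.Ioc (q * L) ((q + 1) * L)
  choose S hSle hScov hScard using fun q => hstatic ((G (q * L)).deleteEdges (X q))
  have hstable (t : ℕ) (ht : t ≤ U) :
      (G t).deleteEdges (X (t / L)) = (G (t / L * L)).deleteEdges (X (t / L)) := by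
    refine deleteEdges_eq_of_image_Ioc_subset he (Nat.div_mul_le_self t L) ht
      (Set.image_mono (Set.Ioc_subset_Ioc_right ?_))
    have := Nat.lt_div_mul_add (a := t) hL
    rw [add_mul, one_mul]
    omega
  have hX (q : ℕ) : (X q).ncard ≤ L :=
    Set.ncard_image_le (Set.finite_Ioc _ _) |>.trans (by simp [add_mul])
  set H : ℕ → SimpleGraph V := fun t => S (t / L) ⊔ (G t ⊓ fromEdgeSet (X (t / L)))
  have hsize (t : ℕ) : (H t).edgeSet.ncard ≤ 2 * L :=
    (ncard_edgeSet_sup_inf_fromEdgeSet_le _ _ _).trans (by linarith [hScard (t / L), hX (t / L)])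
  have hstep : ∀ t ∈ Icc 1 U, ¬L ∣ t →
      (symmDiff (H t).edgeSet (H (t - 1)).edgeSet).ncard ≤ 1 := by
    intro t ht hdvd
    obtain ⟨ht₁, htU⟩ := mem_Icc.mp ht
    obtain ⟨s, rfl⟩ : ∃ s, t = s + 1 := ⟨t - 1, by omega⟩
    have hq : (s + 1) / L = s / L := Nat.succ_div_of_not_dvd hdvd
    refine (Set.ncard_le_ncard ?_ (Set.finite_singleton (e (s + 1)))).trans
      (Set.ncard_singleton _).le
    simp only [H, hq, Nat.add_sub_cancel]
    exact (symmDiff_edgeSet_sup_inf_subset _ _ _ _).trans (by simpa using he (s + 1) ht₁ htU)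
  have hjump : ∀ t ∈ Icc 1 U, L ∣ t →
      (symmDiff (H t).edgeSet (H (t - 1)).edgeSet).ncard ≤ 4 * L := fun t _ _ =>
    (Set.ncard_le_ncard Set.symmDiff_subset_union (Set.toFinite _)).trans
      ((Set.ncard_union_le _ _).trans (by linarith [hsize t, hsize (t - 1)]))
  refine ⟨H, fun t ht => ⟨sup_le ?_ inf_le_left, fun u v => edist_sup_inf_fromEdgeSet_le hc ?_,
    hsize t⟩, (sum_Icc_le_of_dvd_of_not_dvd hstep hjump).trans_eq (by norm_num)⟩
  · exact (hSle _).trans ((hstable t ht).symm ▸ deleteEdges_le _)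
  · exact hstable t ht ▸ hScov (t / L)

end Dynamic

end SimpleGraph

/-- There is an absolute constant `C > 0` such that for every `n ≥ 2`, `k ≥ 1`,
and every fully dynamic sequence of graphs on `n` vertices starting from the empty graph,
there is a sequence of maintained `(2k-1)`-spanners of size `O(n^{1+1/k} log n)` with total
recourse `O((U+1) log n)`. -/
theorem dynamic_greedy_spanner :
    ∃ C : ℝ, 0 < C ∧
      ∀ (n : ℕ), 2 ≤ n → ∀ (k : ℕ), 1 ≤ k →
      ∀ (V : Type) [Fintype V], Fintype.card V = n →
      ∀ (U : ℕ) (G : ℕ → SimpleGraph V),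
        G 0 = ⊥ →
        (∀ t, 1 ≤ t → t ≤ U → ∃ e : Sym2 V,
            G t = G (t - 1) ⊔ SimpleGraph.fromEdgeSet {e} ∨
            G t = (G (t - 1)).deleteEdges {e}) →
        ∃ H : ℕ → SimpleGraph V,
          (∀ t ≤ U,
            H t ≤ G t ∧
            (∀ u v : V, (H t).edist u v ≤ ((2 * k - 1 : ℕ) : ℕ∞) * (G t).edist u v) ∧
            (((H t).edgeSet.ncard : ℝ) ≤ C * (n : ℝ) ^ (1 + 1 / (k : ℝ)) * Real.log n)) ∧
          (∑ t ∈ Finset.Icc 1 U,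
              ((symmDiff ((H t).edgeSet) ((H (t - 1)).edgeSet)).ncard : ℝ))
            ≤ C * ((U : ℝ) + 1) * Real.log n := by
  refine ⟨5 / Real.log 2, by positivity, ?_⟩
  intro n hn k hk V _ hV U G _ hstep
  subst hV
  have : Nonempty (Sym2 V) := (Fintype.card_pos_iff.mp (by omega)).map fun v => s(v, v)
  choose! e he using hstep
  set D := ⌊(Fintype.card V : ℝ) ^ (1 / (k : ℝ))⌋₊ + 1
  obtain ⟨H, hH, hrec⟩ := exists_dynamic_spanner (c := 2 * k - 1) (L := D * Fintype.card V)
    (by omega) (Nat.mul_pos (by positivity) (by omega))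
    (fun Y => Y.exists_spanner_ncard_edgeSet_le hk (lt_floor_rpow_add_one_pow _ (by omega)))
    fun t h₁ h₂ => symmDiff_edgeSet_subset_of_eq_sup_or_eq_deleteEdges (he t h₁ h₂)
  have hscale (y : ℝ) (hy : 0 ≤ y) : 5 * y ≤ 5 / Real.log 2 * y * Real.log (Fintype.card V) :=
    calc 5 * y = 5 / Real.log 2 * y * Real.log 2 := by field_simp
      _ ≤ _ := by gcongr; exact_mod_cast hn
  refine ⟨H, fun t ht => ⟨(hH t ht).1, edist_le_mul_edist_of_forall_adj (by omega) (hH t ht).2.1,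
    ?_⟩, ?_⟩
  · calc ((H t).edgeSet.ncard : ℝ) ≤ 2 * ((D : ℝ) * Fintype.card V) := by
          exact_mod_cast (hH t ht).2.2
      _ ≤ 5 * (Fintype.card V : ℝ) ^ (1 + 1 / (k : ℝ)) := by
          linarith [floor_rpow_add_one_mul_le (by omega : 1 ≤ Fintype.card V) k,
            Real.rpow_nonneg (Fintype.card V).cast_nonneg (1 + 1 / (k : ℝ))]
      _ ≤ _ := hscale _ (by positivity)
  · calc _ ≤ ((5 * U : ℕ) : ℝ) := by exact_mod_cast hrec
      _ ≤ 5 * ((U : ℝ) + 1) := by push_cast; linarith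
      _ ≤ _ := hscale _ (by positivity)
end

section
/- Let k ≥ 1 be a natural number, let L be a list of unordered pairs of vertices of a finite vertex type V, and let H = greedy(k, L). Then for every pair {u,v} occurring as an entry of L, the extended distance between u and v in H satisfies edist_H(u,v) ≤ 2k − 1. -/
/-- The greedy spanner construction: process the entries of `L` in order, starting from the
empty graph, adding an entry `{u,v}` as an edge iff the extended distance between `u` and `v`
in the graph built so far is at least `2k`. -/
noncomputable def greedy {V : Type*} (k : ℕ) (L : List (Sym2 V)) : SimpleGraph V :=
  L.foldl (fun H e =>
    if (2 * k : ℕ∞) ≤ Sym2.lift ⟨H.edist, fun _ _ => H.edist_comm⟩ e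
    then H ⊔ SimpleGraph.fromEdgeSet {e} else H) ⊥

/-! Right after the entry `{u,v}` has been processed, `u` and `v` are at distance at most
`2k - 1`: either the edge `uv` was added, or they were already at distance `< 2k`. The graph
only grows while the rest of the list is processed, so this distance can only decrease. -/

theorem List.le_foldl_of_forall_le {α β : Type*} [Preorder α] {f : α → β → α}
    (hf : ∀ a b, a ≤ f a b) (l : List β) (a : α) : a ≤ l.foldl f a := by
  induction l generalizing a with
  | nil => exact le_rfl
  | cons b l ih => exact (hf a b).trans (ih (f a b))

section

open SimpleGraph

variable {V : Type*}

noncomputable def greedyStep (k : ℕ) (H : SimpleGraph V) (e : Sym2 V) : SimpleGraph V :=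
  if (2 * k : ℕ∞) ≤ Sym2.lift ⟨H.edist, fun _ _ => H.edist_comm⟩ e
  then H ⊔ fromEdgeSet {e} else H

theorem greedy_eq_foldl (k : ℕ) (L : List (Sym2 V)) : greedy k L = L.foldl (greedyStep k) ⊥ :=
  rfl

theorem le_greedyStep (k : ℕ) (H : SimpleGraph V) (e : Sym2 V) : H ≤ greedyStep k H e := by
  unfold greedyStep
  split_ifs
  exacts [le_sup_left, le_rfl]

theorem edist_greedyStep_le {k : ℕ} (hk : 1 ≤ k) (H : SimpleGraph V) (u v : V) :
    (greedyStep k H s(u, v)).edist u v ≤ ((2 * k - 1 : ℕ) : ℕ∞) := by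
  unfold greedyStep
  split_ifs with hfar
  · have hnear : (H ⊔ fromEdgeSet {s(u, v)}).edist u v ≤ 1 := by
      rw [edist_le_one_iff_adj_or_eq]
      by_cases huv : u = v
      · exact Or.inr huv
      · exact Or.inl (Or.inr ⟨rfl, huv⟩)
    exact hnear.trans (by exact_mod_cast (by omega : 1 ≤ 2 * k - 1))
  · have hlt : H.edist u v < ((2 * k - 1 : ℕ) : ℕ∞) + 1 := by
      rw [← Nat.cast_add_one, Nat.sub_add_cancel (by omega)]
      simpa using hfar
    exact (ENat.lt_add_one_iff (ENat.natCast_ne_top _)).mp hlt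

end

/-- every entry `{u,v}` of `L` has extended distance at most `2k - 1` in the
greedy graph `greedy k L`. -/
theorem greedy_edist_of_mem {V : Type*} (k : ℕ) (hk : 1 ≤ k) (L : List (Sym2 V))
    (u v : V) (huv : s(u, v) ∈ L) :
    (greedy k L).edist u v ≤ ((2 * k - 1 : ℕ) : ℕ∞) := by
  obtain ⟨s, t, rfl⟩ := List.append_of_mem huv
  set H := s.foldl (greedyStep k) ⊥
  have hgrow : greedyStep k H s(u, v) ≤ greedy k (s ++ s(u, v) :: t) := by
    rw [greedy_eq_foldl, List.foldl_append, List.foldl_cons]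
    exact List.le_foldl_of_forall_le (le_greedyStep k) t _
  exact (SimpleGraph.edist_anti hgrow).trans (edist_greedyStep_le hk H u v)
end

section
/- Let k ≥ 1 be a natural number and let H be a simple graph on a finite vertex type with n vertices in which every cycle has length at least 2k + 1 (i.e., the girth of H exceeds 2k). Then the number of edges of H is at most n^{1+1/k} + n (as a real-number inequality). -/
/-!
If a graph on `n` vertices has more than `D * n` edges, repeatedly deleting a vertex of degree at
most `D` leaves a nonempty induced subgraph of minimum degree greater than `D`, and its girth is
still larger than `2k`. There, two paths of length at most `k` with the same endpoints coincide, so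
the paths of length `k` ending at a fixed vertex are determined by their first vertex. On the other
hand, every path of length `j < k` can be extended at its start in at least `D` ways, since the only
neighbour of its first vertex lying on it is its second vertex. Hence `D ^ k ≤ n`; the choice
`D = ⌊n ^ (1 / k)⌋ + 1` makes `D ^ k > n`, so there are at most `D * n ≤ n ^ (1 + 1 / k) + n` edges.
-/

open Finset

namespace SimpleGraph

variable {V : Type*} {G : SimpleGraph V}

theorem Walk.IsPath.eq_of_length_add_length_lt_egirth {u v : V} {p q : G.Walk u v}
    (hp : p.IsPath) (hq : q.IsPath) (h : p.length + q.length < G.egirth) : p = q := by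
  by_contra hne
  -- the graph spanned by the edges of `p` and `q` has a cycle, and that cycle is short
  let F : SimpleGraph V := fromEdgeSet {e | e ∈ p.edges ∨ e ∈ q.edges}
  have hpF : ∀ e ∈ p.edges, e ∈ F.edgeSet := fun e he => by
    rw [edgeSet_fromEdgeSet]
    exact ⟨Or.inl he, G.not_isDiag_of_mem_edgeSet (p.edges_subset_edgeSet he)⟩
  have hqF : ∀ e ∈ q.edges, e ∈ F.edgeSet := fun e he => by
    rw [edgeSet_fromEdgeSet]
    exact ⟨Or.inr he, G.not_isDiag_of_mem_edgeSet (q.edges_subset_edgeSet he)⟩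
  have hFG : F ≤ G := fun a b hab => by
    rcases ((fromEdgeSet_adj _).1 hab).1 with he | he
    exacts [p.adj_of_mem_edges he, q.adj_of_mem_edges he]
  have hF : ¬ F.IsAcyclic := fun hF => hne <| Walk.ext_support <| by
    simpa using congrArg (·.1.support)
      ((hF.subsingleton_path u v).elim ⟨_, hp.transfer hpF⟩ ⟨_, hq.transfer hqF⟩)
  obtain ⟨x, c, hc⟩ : ∃ x, ∃ c : F.Walk x x, c.IsCycle := by simpa [IsAcyclic] using hF
  have hsub : c.edges ⊆ p.edges ++ q.edges := fun e he => by
    have he' := c.edges_subset_edgeSet he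
    rw [edgeSet_fromEdgeSet] at he'
    exact List.mem_append.2 he'.1
  have hlen : c.length ≤ p.length + q.length := by
    simpa using (hc.edges_nodup.subperm hsub).length_le
  have hgirth := egirth_le_length (hc.mapLe hFG)
  rw [Walk.length_mapLe] at hgirth
  exact (hgirth.trans_lt ((Nat.cast_le.2 hlen).trans_lt h)).false

theorem Walk.IsPath.eq_snd_of_adj_start_of_length_lt_egirth [DecidableEq V] {u v x : V}
    {p : G.Walk u v} (hp : p.IsPath) (hx : x ∈ p.support) (hadj : G.Adj u x)
    (h : p.length + 1 < G.egirth) : x = p.snd := by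
  have htake : p.takeUntil x hx = hadj.toWalk := by
    refine (hp.takeUntil hx).eq_of_length_add_length_lt_egirth (.of_adj hadj) (lt_of_le_of_lt ?_ h)
    rw [Adj.length_toWalk]
    exact_mod_cast Nat.add_le_add_right (p.length_takeUntil_le_length hx) 1
  have hget := p.getVert_length_takeUntil hx
  rwa [htake, Adj.length_toWalk, eq_comm] at hget

variable [Fintype V] [DecidableEq V] [DecidableRel G.Adj]

variable (G) in
def pathsOfLengthTo (j : ℕ) (v : V) : Finset (Σ u, G.Walk u v) :=
  {p ∈ univ.sigma fun u => G.finsetWalkLength j u v | p.2.IsPath}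

theorem mem_pathsOfLengthTo {j : ℕ} {v : V} {p : Σ u, G.Walk u v} :
    p ∈ G.pathsOfLengthTo j v ↔ p.2.length = j ∧ p.2.IsPath := by
  simp [pathsOfLengthTo, mem_finsetWalkLength_iff]

theorem le_card_neighborFinset_filter_notMem_support {D : ℕ} {u v : V} {p : G.Walk u v}
    (hp : p.IsPath) (hdeg : D < G.degree u) (h : p.length + 1 < G.egirth) :
    D ≤ #{x ∈ G.neighborFinset u | x ∉ p.support} := by
  have hon : #{x ∈ G.neighborFinset u | x ∈ p.support} ≤ 1 := card_le_one.2 fun x hx y hy => by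
    simp only [mem_filter, mem_neighborFinset] at hx hy
    rw [hp.eq_snd_of_adj_start_of_length_lt_egirth hx.2 hx.1 h,
      hp.eq_snd_of_adj_start_of_length_lt_egirth hy.2 hy.1 h]
  have hsplit := card_filter_add_card_filter_not (s := G.neighborFinset u) (· ∈ p.support)
  rw [card_neighborFinset_eq_degree] at hsplit
  omega

theorem mul_card_pathsOfLengthTo_le {D j : ℕ} (v : V) (hdeg : ∀ u, D < G.degree u)
    (h : j + 1 < G.egirth) :
    D * #(G.pathsOfLengthTo j v) ≤ #(G.pathsOfLengthTo (j + 1) v) := by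
  let extensions := (G.pathsOfLengthTo j v).sigma
    fun p => {x ∈ G.neighborFinset p.1 | x ∉ p.2.support}
  calc D * #(G.pathsOfLengthTo j v)
      ≤ ∑ p ∈ G.pathsOfLengthTo j v, #{x ∈ G.neighborFinset p.1 | x ∉ p.2.support} := by
        rw [mul_comm, ← smul_eq_mul]
        refine card_nsmul_le_sum _ _ _ fun p hp => ?_
        rw [mem_pathsOfLengthTo] at hp
        exact le_card_neighborFinset_filter_notMem_support hp.2 (hdeg _) (by rw [hp.1]; exact h)
    _ = #extensions := (card_sigma _ _).symm
    _ ≤ #(G.pathsOfLengthTo (j + 1) v) := by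
        refine card_le_card_of_surjOn (fun q => ⟨⟨q.2.snd, q.2.tail⟩, q.1⟩) ?_
        rintro ⟨⟨u, p⟩, x⟩ hpx
        simp only [extensions, coe_sigma, Set.mem_sigma_iff, mem_coe, mem_filter,
          mem_neighborFinset, mem_pathsOfLengthTo] at hpx
        obtain ⟨⟨hlen, hp⟩, hadj, hx⟩ := hpx
        refine ⟨⟨x, .cons hadj.symm p⟩, ?_, by simp [Walk.copy]⟩
        rw [mem_coe, mem_pathsOfLengthTo]
        exact ⟨by simp [hlen], hp.cons hx⟩

theorem pow_le_card_pathsOfLengthTo {D k : ℕ} (v : V) (hdeg : ∀ u, D < G.degree u)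
    (h : k < G.egirth) : D ^ k ≤ #(G.pathsOfLengthTo k v) := by
  induction k with
  | zero => exact one_le_card.2 ⟨⟨v, .nil⟩, by simp [mem_pathsOfLengthTo]⟩
  | succ j ih =>
    calc D ^ (j + 1) = D * D ^ j := pow_succ' D j
      _ ≤ D * #(G.pathsOfLengthTo j v) := by
        gcongr
        exact ih (lt_of_le_of_lt (by exact_mod_cast j.le_succ) h)
      _ ≤ #(G.pathsOfLengthTo (j + 1) v) :=
        mul_card_pathsOfLengthTo_le v hdeg (by exact_mod_cast h)

theorem card_pathsOfLengthTo_le_card {k : ℕ} (v : V) (h : k + k < G.egirth) :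
    #(G.pathsOfLengthTo k v) ≤ Fintype.card V := by
  refine (card_le_card_of_injOn Sigma.fst (fun _ _ => mem_univ _) ?_).trans_eq card_univ
  rintro ⟨u, p⟩ hp ⟨u', q⟩ hq (rfl : u = u')
  simp only [mem_coe, mem_pathsOfLengthTo] at hp hq
  rw [hp.2.eq_of_length_add_length_lt_egirth hq.2 (by rw [hp.1, hq.1]; exact_mod_cast h)]

theorem pow_le_card_of_lt_degree_of_lt_egirth [Nonempty V] {D k : ℕ}
    (hdeg : ∀ u, D < G.degree u) (h : 2 * k < G.egirth) : D ^ k ≤ Fintype.card V := by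
  obtain ⟨v⟩ := ‹Nonempty V›
  refine (pow_le_card_pathsOfLengthTo v hdeg ?_).trans (card_pathsOfLengthTo_le_card v ?_)
  all_goals refine lt_of_le_of_lt ?_ h; norm_cast; omega

theorem card_edgeFinset_inter_sym2_le (S : Finset V) (v : V) :
    #(G.edgeFinset ∩ S.sym2) ≤ #(G.edgeFinset ∩ (S.erase v).sym2) + #(G.neighborFinset v ∩ S) := by
  have hsub : G.edgeFinset ∩ S.sym2 ⊆
      (G.edgeFinset ∩ (S.erase v).sym2) ∪ (G.neighborFinset v ∩ S).image (s(v, ·)) := by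
    intro e he
    induction e using Sym2.ind with | _ a b => ?_
    simp only [mem_inter, mem_edgeFinset, mem_edgeSet, mk_mem_sym2_iff] at he
    obtain ⟨hab, ha, hb⟩ := he
    by_cases hva : v = a
    · subst hva
      exact mem_union_right _ (mem_image.2 ⟨b, by simp [hab, hb]⟩)
    by_cases hvb : v = b
    · subst hvb
      exact mem_union_right _ (mem_image.2 ⟨a, by simp [hab.symm, ha, Sym2.eq_swap]⟩)
    exact mem_union_left _ (by simp [hab, ha, hb, Ne.symm hva, Ne.symm hvb])
  exact (card_le_card hsub).trans <| (card_union_le _ _).trans <| by grw [card_image_le]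

theorem exists_nonempty_forall_lt_card_neighborFinset_inter (D : ℕ) (S : Finset V)
    (h : D * #S < #(G.edgeFinset ∩ S.sym2)) :
    ∃ T ⊆ S, T.Nonempty ∧ ∀ v ∈ T, D < #(G.neighborFinset v ∩ T) := by
  induction S using strongInduction with | H S ih => ?_
  by_cases hlow : ∃ v ∈ S, #(G.neighborFinset v ∩ S) ≤ D
  · obtain ⟨v, hv, hvD⟩ := hlow
    have hcard := card_erase_add_one hv
    have hedges := G.card_edgeFinset_inter_sym2_le S v
    obtain ⟨T, hT, hTS⟩ := ih _ (erase_ssubset hv) (by rw [← hcard, mul_add_one] at h; omega)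
    exact ⟨T, hT.trans (erase_subset v S), hTS⟩
  · push Not at hlow
    refine ⟨S, subset_rfl, nonempty_iff_ne_empty.2 ?_, hlow⟩
    rintro rfl
    simp at h

theorem card_edgeFinset_le_mul_card_of_lt_egirth {D k : ℕ} (hD : Fintype.card V < D ^ k)
    (h : 2 * k < G.egirth) : #G.edgeFinset ≤ D * Fintype.card V := by
  by_contra! hlt
  obtain ⟨T, -, ⟨v, hv⟩, hT⟩ := G.exists_nonempty_forall_lt_card_neighborFinset_inter D univ
    (by simpa [sym2_univ] using hlt)
  have : Nonempty (T : Set V) := ⟨⟨v, hv⟩⟩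
  have hdeg : ∀ u : (T : Set V), D < (G.induce T).degree u := fun u => by
    rw [← card_neighborFinset_eq_degree, ← card_map (.subtype _)]
    convert hT u u.2 using 2
    convert map_neighborFinset_induce u
    simp
  have hgirth : 2 * k < (G.induce T).egirth :=
    h.trans_le (Embedding.induce (G := G) (T : Set V)).isContained.egirth_le
  have hcardT : Fintype.card (T : Set V) ≤ Fintype.card V :=
    Fintype.card_le_of_injective _ Subtype.val_injective
  have := pow_le_card_of_lt_degree_of_lt_egirth hdeg hgirth
  omega

end SimpleGraph

namespace Real

theorem lt_floor_rpow_one_div_add_one_pow {x : ℝ} (hx : 0 ≤ x) {k : ℕ} (hk : k ≠ 0) :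
    x < ((⌊x ^ (1 / (k : ℝ))⌋₊ + 1 : ℕ) : ℝ) ^ k := by
  have hroot : (x ^ (1 / (k : ℝ))) ^ k = x := by
    rw [one_div, rpow_inv_natCast_pow hx hk]
  have h := pow_lt_pow_left₀ (Nat.lt_floor_add_one (x ^ (1 / (k : ℝ)))) (by positivity) hk
  rw [hroot] at h
  exact_mod_cast h

theorem floor_rpow_one_div_add_one_mul_le {x : ℝ} (hx : 0 ≤ x) (k : ℕ) :
    ((⌊x ^ (1 / (k : ℝ))⌋₊ + 1 : ℕ) : ℝ) * x ≤ x ^ (1 + 1 / (k : ℝ)) + x := by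
  have hfloor := Nat.floor_le (by positivity : 0 ≤ x ^ (1 / (k : ℝ)))
  rw [rpow_add' hx (by positivity), rpow_one]
  push_cast
  nlinarith

end Real

/-- a graph on `n` vertices with girth exceeding `2k` (every cycle has length
at least `2k + 1`) has at most `n^{1+1/k} + n` edges. -/
theorem moore_bound {V : Type*} [Fintype V] (n : ℕ) (hn : Fintype.card V = n)
    (k : ℕ) (hk : 1 ≤ k) (H : SimpleGraph V)
    (hgirth : ∀ (v : V) (c : H.Walk v v), c.IsCycle → 2 * k + 1 ≤ c.length) :
    (H.edgeSet.ncard : ℝ) ≤ (n : ℝ) ^ (1 + 1 / (k : ℝ)) + n := by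
  classical
  subst hn
  have hg : 2 * k < H.egirth := by
    rw [← ENat.add_one_le_iff (by exact_mod_cast ENat.natCast_ne_top (2 * k))]
    exact SimpleGraph.le_egirth.2 fun v c hc => by exact_mod_cast hgirth v c hc
  have hedges := H.card_edgeFinset_le_mul_card_of_lt_egirth (by
    exact_mod_cast Real.lt_floor_rpow_one_div_add_one_pow (Fintype.card V).cast_nonneg
      (by omega : k ≠ 0)) hg
  rw [← SimpleGraph.coe_edgeFinset, Set.ncard_coe_finset]
  exact (Nat.cast_le.2 hedges).trans (by
    exact_mod_cast Real.floor_rpow_one_div_add_one_mul_le (Fintype.card V).cast_nonneg k)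
end

section
/- Let k ≥ 1 be a natural number, let L be a list of unordered pairs of vertices of a finite vertex type V, let H = greedy(k, L), and let L₁ be the subsequence of L consisting of exactly those entries of L that are edges of H (taken in the order they appear in L). Then greedy(k, L₁) = H; in particular, when greedy(k, ·) processes L₁, every entry of L₁ is added as an edge. -/
/-- The subsequence of `L` consisting of exactly those entries that are edges of
`greedy k L`, in the order they appear in `L`. -/
noncomputable def greedyKept {V : Type*} (k : ℕ) (L : List (Sym2 V)) : List (Sym2 V) :=
  L.filter (fun e => @decide (e ∈ (greedy k L).edgeSet) (Classical.propDecidable _))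

/-!
An entry of `L` outside `greedy k L` left the graph built so far unchanged, so deleting it from
the list changes nothing; by induction along `L`, every entry of the filtered list is then
processed against the same graph as in the original run, and reproduces the same step.
-/

namespace SimpleGraph

variable {V : Type*}

noncomputable def greedyStep (k : ℕ) (H : SimpleGraph V) (e : Sym2 V) : SimpleGraph V :=
  if (2 * k : ℕ∞) ≤ Sym2.lift ⟨H.edist, fun _ _ => H.edist_comm⟩ e
  then H ⊔ fromEdgeSet {e} else H

theorem le_greedyStep (k : ℕ) (H : SimpleGraph V) (e : Sym2 V) : H ≤ greedyStep k H e := by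
  unfold greedyStep
  split
  · exact le_sup_left
  · exact le_rfl

theorem le_foldl_greedyStep (k : ℕ) (L : List (Sym2 V)) (H : SimpleGraph V) :
    H ≤ L.foldl (greedyStep k) H := by
  induction L generalizing H with
  | nil => exact le_rfl
  | cons e L ih => exact (le_greedyStep k H e).trans (ih _)

-- This covers a diagonal `e`, which `fromEdgeSet` discards.
theorem greedyStep_eq_self_of_not_mem {k : ℕ} {H : SimpleGraph V} {e : Sym2 V}
    (he : e ∉ (greedyStep k H e).edgeSet) : greedyStep k H e = H := by
  unfold greedyStep at he ⊢
  split_ifs at he ⊢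
  · refine sup_eq_left.mpr (edgeSet_subset_edgeSet.mp fun x hx => ?_)
    have hxe : x = e := (edgeSet_fromEdgeSet _ ▸ hx).1
    subst hxe
    exact absurd (by rw [edgeSet_sup]; exact Or.inr hx) he
  · rfl

theorem foldl_greedyStep_filter {k : ℕ} {G : SimpleGraph V} {p : Sym2 V → Bool}
    (hp : ∀ e ∈ G.edgeSet, p e) {L : List (Sym2 V)} {H : SimpleGraph V}
    (hL : L.foldl (greedyStep k) H ≤ G) :
    (L.filter p).foldl (greedyStep k) H = L.foldl (greedyStep k) H := by
  induction L generalizing H with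
  | nil => rfl
  | cons e L ih =>
    rw [List.foldl_cons] at hL ⊢
    by_cases hpe : p e
    · rw [List.filter_cons_of_pos hpe, List.foldl_cons, ih hL]
    · have hstep : greedyStep k H e = H := by
        refine greedyStep_eq_self_of_not_mem fun he => hpe (hp e ?_)
        exact edgeSet_subset_edgeSet.mpr ((le_foldl_greedyStep k L _).trans hL) he
      rw [List.filter_cons_of_neg hpe, hstep, ih (hstep ▸ hL)]

end SimpleGraph

open SimpleGraph in
theorem greedy_kept_eq_general {V : Type*} (k : ℕ) (L : List (Sym2 V)) :
    greedy k (greedyKept k L) = greedy k L ∧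
    ∀ e ∈ greedyKept k L, e ∈ (greedy k (greedyKept k L)).edgeSet := by
  -- `greedy k` is definitionally `List.foldl (greedyStep k) ⊥`.
  have hsame : greedy k (greedyKept k L) = greedy k L :=
    foldl_greedyStep_filter (G := greedy k L) (fun e he => by simpa using he) le_rfl
  refine ⟨hsame, fun e he => ?_⟩
  rw [hsame]
  simp only [greedyKept, List.mem_filter, decide_eq_true_eq] at he
  exact he.2

/-- running greedy on the subsequence of entries kept by `greedy k L`
reproduces `greedy k L`; in particular every entry of that subsequence is added as an edge. -/
theorem greedy_kept_eq {V : Type*} (k : ℕ) (hk : 1 ≤ k) (L : List (Sym2 V)) :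
    greedy k (greedyKept k L) = greedy k L ∧
    ∀ e ∈ greedyKept k L, e ∈ (greedy k (greedyKept k L)).edgeSet :=
  greedy_kept_eq_general k L
end

section
/- Let J and M be finite sets, let R be a finite set equipped with maps job : R → J and mach : R → Finset M, and let x_1, …, x_T be distinct elements of M. For 1 ≤ t ≤ T, define R^t = { r ∈ R : mach(r) ∩ {x_1, …, x_{t−1}} = ∅ } and, for u ∈ J, deg^t(u) = #{ r ∈ R^t : job(r) = u }. Then ∑_{t=1}^{T} ∑_{r ∈ R^t, x_t ∈ mach(r)} 1/deg^t(job(r)) ≤ ∑_{u ∈ J} H(deg^1(u)), where H(d) = ∑_{j=1}^{d} 1/j denotes the d-th harmonic number and all sums are over the reals. -/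
/-!
Charge each job separately. When machine `x t` is deleted, the `c` surviving routines of job `u`
that use it are charged `1 / d` each, where `d` is the number of survivors of `u`; afterwards
`d - c` survivors remain. Since `c / d ≤ H(d) - H(d - c)`, the charges of job `u` telescope to at
most `H(deg¹ u)`.
-/

open Finset

lemma div_add_le_harmonic_sub (b c : ℕ) :
    (c : ℝ) / (b + c) ≤ harmonic (b + c) - harmonic b := by
  induction c with
  | zero => simp
  | succ c ih =>
    have hshrink : (c : ℝ) / (b + c + 1) ≤ c / (b + c) := by
      rcases c.eq_zero_or_pos with rfl | hc
      · simp
      · exact div_le_div_of_nonneg_left (by positivity) (by positivity) (by linarith)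
    calc ((c + 1 : ℕ) : ℝ) / (b + (c + 1 : ℕ))
        = c / (b + c + 1) + 1 / (b + c + 1) := by push_cast; ring
      _ ≤ harmonic (b + (c + 1)) - harmonic b := by
        rw [← add_assoc, harmonic_succ]; push_cast; rw [one_div]; linarith

lemma harmonic_nonneg (n : ℕ) : (0 : ℝ) ≤ harmonic n := by
  have h := div_add_le_harmonic_sub 0 n
  rw [zero_add, harmonic_zero, Rat.cast_zero, sub_zero] at h
  exact le_trans (by positivity) h

lemma sum_Icc_one_div_eq_harmonic (n : ℕ) : ∑ i ∈ Icc 1 n, (1 : ℝ) / i = harmonic n := by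
  simp [harmonic_eq_sum_Icc, one_div]

lemma Fin.sum_univ_sub_succ {T : ℕ} (g : ℕ → ℝ) :
    ∑ t : Fin T, (g t - g (t + 1)) = g 0 - g T := by
  rw [Fin.sum_univ_eq_sum_range (fun t => g t - g (t + 1)), sum_range_sub']

lemma sum_filter_inv_card_fiber_le {R J : Type*} [Fintype J] [DecidableEq J]
    (A : Finset R) (p : R → Prop) [DecidablePred p] (job : R → J) :
    ∑ r ∈ A.filter p, (1 : ℝ) / #(A.filter (job · = job r))
      ≤ ∑ u, ((harmonic #(A.filter (job · = u)) : ℝ)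
               - harmonic #((A.filter (¬p ·)).filter (job · = u))) := by
  rw [← sum_fiberwise (A.filter p) job]
  refine sum_le_sum fun u _ => ?_
  have hsplit : #(A.filter (job · = u))
      = #((A.filter (¬p ·)).filter (job · = u)) + #((A.filter p).filter (job · = u)) := by
    rw [← card_filter_add_card_filter_not (s := A.filter (job · = u)) p, add_comm]
    simp only [filter_filter, and_comm]
  calc ∑ r ∈ (A.filter p).filter (job · = u), (1 : ℝ) / #(A.filter (job · = job r))
      = #((A.filter p).filter (job · = u)) / #(A.filter (job · = u)) := by
        rw [sum_congr rfl fun r hr => by rw [(mem_filter.mp hr).2], sum_const, nsmul_eq_mul,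
          mul_one_div]
    _ ≤ _ := by rw [hsplit]; push_cast; exact div_add_le_harmonic_sub _ _

section Survivors

variable {R M : Type*} [Fintype R] [DecidableEq M] {T : ℕ}

def survivors (x : Fin T → M) (mach : R → Finset M) (t : ℕ) : Finset R :=
  univ.filter fun r => ∀ s : Fin T, (s : ℕ) < t → x s ∉ mach r

lemma survivors_succ (x : Fin T → M) (mach : R → Finset M) (t : Fin T) :
    survivors x mach (t + 1) = (survivors x mach t).filter (x t ∉ mach ·) := by
  ext r
  simp only [survivors, mem_filter, mem_univ, true_and, Nat.lt_succ_iff_lt_or_eq]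
  constructor
  · intro h
    exact ⟨fun s hs => h s (Or.inl hs), h t (Or.inr rfl)⟩
  · rintro ⟨h, ht⟩ s (hs | hs)
    · exact h s hs
    · rwa [Fin.ext hs]

end Survivors

theorem target_load_charging_general {J M R : Type*} [Fintype J] [Fintype R]
    [DecidableEq J] [DecidableEq M]
    (job : R → J) (mach : R → Finset M) (T : ℕ) (x : Fin T → M) :
    let Rt : ℕ → Finset R := fun t =>
      Finset.univ.filter (fun r => ∀ s : Fin T, (s : ℕ) < t → x s ∉ mach r)
    let deg : ℕ → J → ℕ := fun t u => ((Rt t).filter (fun r => job r = u)).card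
    ∑ t : Fin T, ∑ r ∈ (Rt (t : ℕ)).filter (fun r => x t ∈ mach r),
        (1 : ℝ) / (deg (t : ℕ) (job r))
      ≤ ∑ u : J, ∑ i ∈ Finset.Icc 1 (deg 0 u), (1 : ℝ) / i := by
  intro Rt deg
  let H : ℕ → J → ℝ := fun t u => harmonic (deg t u)
  calc _ ≤ ∑ t : Fin T, ∑ u, (H t u - H (t + 1) u) := by
        refine sum_le_sum fun t _ => ?_
        simp only [H, deg]
        rw [show Rt (t + 1) = _ from survivors_succ x mach t]
        exact sum_filter_inv_card_fiber_le (Rt t) (x t ∈ mach ·) job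
    _ = ∑ u, ∑ t : Fin T, (H t u - H (t + 1) u) := sum_comm
    _ ≤ ∑ u, H 0 u := sum_le_sum fun u _ => by
        rw [Fin.sum_univ_sub_succ (H · u)]
        exact sub_le_self _ (harmonic_nonneg _)
    _ = _ := by simp only [H, sum_Icc_one_div_eq_harmonic]

/-- charging bound for target loads. Machines `x 0, …, x (T-1)` are deleted
one at a time; `Rt t` is the set of routines surviving the first `t` deletions and
`deg t u` the number of surviving routines with job `u`. The total target-load charged to
the deleted machines is at most the sum of harmonic numbers `H(deg 0 u)` over jobs `u`. -/
theorem target_load_charging {J M R : Type*} [Fintype J] [Fintype M] [Fintype R]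
    [DecidableEq J] [DecidableEq M]
    (job : R → J) (mach : R → Finset M) (T : ℕ) (x : Fin T → M)
    (hx : Function.Injective x) :
    let Rt : ℕ → Finset R := fun t =>
      Finset.univ.filter (fun r => ∀ s : Fin T, (s : ℕ) < t → x s ∉ mach r)
    let deg : ℕ → J → ℕ := fun t u => ((Rt t).filter (fun r => job r = u)).card
    ∑ t : Fin T, ∑ r ∈ (Rt (t : ℕ)).filter (fun r => x t ∈ mach r),
        (1 : ℝ) / (deg (t : ℕ) (job r))
      ≤ ∑ u : J, ∑ i ∈ Finset.Icc 1 (deg 0 u), (1 : ℝ) / i :=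
  target_load_charging_general job mach T x
end
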